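/- Let C be a commutative ring in which 2 is invertible, F a finitely generated projective C-module, and R ⊆ F ⊗_C F a C-submodule which is a direct summand of the submodule Sym_2(F) of symmetric tensors. Then the inclusions C ↪ A and F ↪ E (v ↦ v ⊗ 1) induce a C-algebra homomorphism φ : T_C(F)/(R) → Cℓ_A(E,q) satisfying φ(class of v) = ι(v ⊗ 1) for all v ∈ F, where T_C(F)/(R) is the quotient of the tensor algebra of F by the two-sided ideal generated by R, and Cℓ_A(E,q) is the Clifford algebra of the quadratic form q on the A-module E. -/

import Mathlib

/-! In `Cl_A(E, q)` the anticommutator `ι(1 ⊗ u) ι(1 ⊗ v) + ι(1 ⊗ v) ι(1 ⊗ u)` is the polar form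
`B(1 ⊗ u, 1 ⊗ v)`, which is the image in `A` of the class of `u ⊗ v + v ⊗ u` in `Q`. Hence the
`C`-algebra map `T_C(F) → Cl_A(E, q)` extending `v ↦ ι(1 ⊗ v)` sends every symmetric tensor `s` to
the scalar given by the class of `s` in `Q = Sym₂ F / R`; this vanishes for `s ∈ R`, so the map
factors through `T_C(F)/(R)`. -/

open TensorProduct

noncomputable section

universe u

variable (C : Type u) [CommRing C]

/-- The submodule of symmetric tensors of `F ⊗[C] F`, spanned by the `u ⊗ v + v ⊗ u`. -/
def symTensors (F : Type u) [AddCommGroup F] [Module C F] : Submodule C (F ⊗[C] F) :=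
  Submodule.span C {z | ∃ u v : F, z = u ⊗ₜ[C] v + v ⊗ₜ[C] u}

variable (F : Type u) [AddCommGroup F] [Module C F]
variable (Rsub : Submodule C (F ⊗[C] F))

/-- `Q := Sym₂ F / R`. -/
abbrev SymQuot : Type u :=
  ↥(symTensors C F) ⧸ Rsub.comap (symTensors C F).subtype

/-- The symmetrized tensor `(u, v) ↦ u ⊗ v + v ⊗ u`, as a bilinear map into `Sym₂ F`. -/
def symMk : F →ₗ[C] F →ₗ[C] ↥(symTensors C F) :=
  LinearMap.mk₂ C
    (fun u v => ⟨u ⊗ₜ[C] v + v ⊗ₜ[C] u, Submodule.subset_span ⟨u, v, rfl⟩⟩)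
    (fun u u' v => Subtype.ext <| by
      simp only [Submodule.coe_add, TensorProduct.add_tmul, TensorProduct.tmul_add]; abel)
    (fun c u v => Subtype.ext <| by
      simp only [SetLike.val_smul, TensorProduct.smul_tmul', TensorProduct.tmul_smul,
        smul_add])
    (fun u v v' => Subtype.ext <| by
      simp only [Submodule.coe_add, TensorProduct.add_tmul, TensorProduct.tmul_add]; abel)
    (fun c u v => Subtype.ext <| by
      simp only [SetLike.val_smul, TensorProduct.smul_tmul', TensorProduct.tmul_smul,
        smul_add])

variable (A : Type u) [CommRing A] [Algebra C A]
variable (j : SymQuot C F Rsub →ₗ[C] A)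

/-- The `C`-bilinear map `F × F → A`, `(u,v) ↦ j (class of u ⊗ v + v ⊗ u)`. -/
def bil0 : F →ₗ[C] F →ₗ[C] A :=
  (symMk C F).compr₂ (j ∘ₗ (Rsub.comap (symTensors C F).subtype).mkQ)

/-- The `A`-bilinear extension of `bil0` to `E = A ⊗[C] F`. -/
def bilE : (A ⊗[C] F) →ₗ[A] (A ⊗[C] F) →ₗ[A] A :=
  LinearMap.liftBaseChange A
    (((LinearMap.liftBaseChangeEquiv A).restrictScalars C).toLinearMap ∘ₗ
      bil0 C F Rsub A j)

/-- The `A`-valued quadratic form `q (x) = ½ ⬝ B (x, x)` on `E = A ⊗[C] F`. -/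
def cliffordQ [Invertible (2 : C)] : QuadraticForm A (A ⊗[C] F) :=
  LinearMap.BilinMap.toQuadraticMap
    ((algebraMap C A (⅟ 2) : A) • bilE C F Rsub A j)

/-- The canonical map `F ⊗[C] F → T_C(F)`, `u ⊗ v ↦ ι u * ι v`. -/
def tensorSquareMul : F ⊗[C] F →ₗ[C] TensorAlgebra C F :=
  TensorProduct.lift
    ((LinearMap.mul C (TensorAlgebra C F)).compl₁₂ (TensorAlgebra.ι C) (TensorAlgebra.ι C))

/-- The relation on `T_C(F)` whose ring quotient is `T_C(F)/(R)`, the quotient by the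
two-sided ideal generated by `R ⊆ F ⊗ F ⊆ T_C(F)`. -/
def relOfR : TensorAlgebra C F → TensorAlgebra C F → Prop :=
  fun x y => (∃ r ∈ Rsub, x = tensorSquareMul C F r) ∧ y = 0

theorem symMk_comm (u v : F) : symMk C F u v = symMk C F v u :=
  Subtype.ext (add_comm _ _)

theorem bil0_comm (u v : F) : bil0 C F Rsub A j u v = bil0 C F Rsub A j v u := by
  simp only [bil0, LinearMap.compr₂_apply, symMk_comm C F u v]

theorem bilE_one_tmul_one_tmul (u v : F) :
    bilE C F Rsub A j ((1 : A) ⊗ₜ[C] u) ((1 : A) ⊗ₜ[C] v) = bil0 C F Rsub A j u v := by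
  simp only [bilE, LinearMap.liftBaseChange_tmul, one_smul, LinearMap.coe_comp,
    LinearEquiv.coe_coe, LinearEquiv.restrictScalars_apply, Function.comp_apply]

section Clifford

variable [Invertible (2 : C)]

theorem polar_cliffordQ_one_tmul_one_tmul (u v : F) :
    QuadraticMap.polar (cliffordQ C F Rsub A j) ((1 : A) ⊗ₜ[C] u) ((1 : A) ⊗ₜ[C] v)
      = bil0 C F Rsub A j u v := by
  have half_mul_two : algebraMap C A (⅟ 2) * 2 = 1 := by
    rw [← map_ofNat (algebraMap C A) 2, ← map_mul, invOf_mul_self, map_one]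
  rw [cliffordQ, LinearMap.BilinMap.polar_toQuadraticMap]
  simp only [LinearMap.smul_apply, smul_eq_mul, bilE_one_tmul_one_tmul,
    bil0_comm C F Rsub A j v u]
  linear_combination bil0 C F Rsub A j u v * half_mul_two

def tensorAlgebraToClifford : TensorAlgebra C F →ₐ[C] CliffordAlgebra (cliffordQ C F Rsub A j) :=
  TensorAlgebra.lift C
    ((CliffordAlgebra.ι (cliffordQ C F Rsub A j)).restrictScalars C ∘ₗ TensorProduct.mk C A F 1)

theorem tensorAlgebraToClifford_ι (v : F) :
    tensorAlgebraToClifford C F Rsub A j (TensorAlgebra.ι C v)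
      = CliffordAlgebra.ι (cliffordQ C F Rsub A j) ((1 : A) ⊗ₜ[C] v) := by
  simp [tensorAlgebraToClifford]

theorem tensorAlgebraToClifford_tensorSquareMul_symMk (u v : F) :
    tensorAlgebraToClifford C F Rsub A j (tensorSquareMul C F (symMk C F u v))
      = algebraMap A _ (bil0 C F Rsub A j u v) := by
  have hsq : tensorSquareMul C F (symMk C F u v)
      = TensorAlgebra.ι C u * TensorAlgebra.ι C v + TensorAlgebra.ι C v * TensorAlgebra.ι C u := by
    simp [symMk, tensorSquareMul]
  rw [hsq, map_add, map_mul, map_mul, tensorAlgebraToClifford_ι, tensorAlgebraToClifford_ι,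
    CliffordAlgebra.ι_mul_ι_add_swap, polar_cliffordQ_one_tmul_one_tmul]

theorem tensorAlgebraToClifford_comp_tensorSquareMul_comp_subtype :
    (tensorAlgebraToClifford C F Rsub A j).toLinearMap ∘ₗ tensorSquareMul C F ∘ₗ
        (symTensors C F).subtype
      = (IsScalarTower.toAlgHom C A (CliffordAlgebra (cliffordQ C F Rsub A j))).toLinearMap ∘ₗ
          j ∘ₗ (Rsub.comap (symTensors C F).subtype).mkQ := by
  refine LinearMap.ext_on Submodule.span_span_coe_preimage ?_
  rintro ⟨_, _⟩ ⟨u, v, rfl⟩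
  exact tensorAlgebraToClifford_tensorSquareMul_symMk C F Rsub A j u v

theorem tensorAlgebraToClifford_tensorSquareMul_eq_zero {r : F ⊗[C] F} (hr : r ∈ Rsub)
    (hr_sym : r ∈ symTensors C F) :
    tensorAlgebraToClifford C F Rsub A j (tensorSquareMul C F r) = 0 := by
  have h := LinearMap.congr_fun
    (tensorAlgebraToClifford_comp_tensorSquareMul_comp_subtype C F Rsub A j) ⟨r, hr_sym⟩
  have hclass : (Rsub.comap (symTensors C F).subtype).mkQ ⟨r, hr_sym⟩ = 0 :=
    (Submodule.Quotient.mk_eq_zero _).2 hr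
  simpa [hclass] using h

end Clifford

theorem exists_algHom_tensorQuot_to_clifford
    [Invertible (2 : C)]
    (hle : Rsub ≤ symTensors C F) :
    ∃ φ : RingQuot (relOfR C F Rsub) →ₐ[C] CliffordAlgebra (cliffordQ C F Rsub A j),
      ∀ v : F,
        φ (RingQuot.mkAlgHom C (relOfR C F Rsub) (TensorAlgebra.ι C v))
          = CliffordAlgebra.ι (cliffordQ C F Rsub A j) ((1 : A) ⊗ₜ[C] v) := by
  have kills_rel : ∀ ⦃x y⦄, relOfR C F Rsub x y →
      tensorAlgebraToClifford C F Rsub A j x = tensorAlgebraToClifford C F Rsub A j y := by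
    rintro _ _ ⟨⟨r, hr, rfl⟩, rfl⟩
    rw [tensorAlgebraToClifford_tensorSquareMul_eq_zero C F Rsub A j hr (hle hr), map_zero]
  refine ⟨RingQuot.liftAlgHom C ⟨tensorAlgebraToClifford C F Rsub A j, kills_rel⟩, fun v => ?_⟩
  rw [RingQuot.liftAlgHom_mkAlgHom_apply, tensorAlgebraToClifford_ι]

end
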